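/- Fix δ > 0 and rate R₁ = 3/2 − δ (per symbol in base-2 log of |𝒳₁|=4 alphabet, i.e., 2^{n R₁} codewords over an alphabet of size 4ⁿ). Choose a uniformly random injective map f: [2^{nR₁}] → 𝒳₁ⁿ with |𝒳₁| = 4. Then with probability at least 1 − 2^{−0.4n} (for sufficiently large n), for every subset S ⊆ 𝒳₁ⁿ of size at most 2^{n/2} arising as a preimage set of a good output, the number of messages w with f(w) ∈ S is at most ⌈3/δ⌉. -/

import Mathlib

open scoped BigOperators Classical

/-- First-encoder input alphabet `𝒳₁ = {a, b, A, B}` of Dueck's MAC. -/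
inductive DXA | a | b | A | B
deriving DecidableEq

instance : Fintype DXA :=
  ⟨{DXA.a, DXA.b, DXA.A, DXA.B}, fun x => by cases x <;> simp⟩

/-- First output component alphabet `𝒴₁ = {a, b, c, A, B, C}` of Dueck's MAC. -/
inductive DYA | a | b | c | A | B | C
deriving DecidableEq

instance : Fintype DYA :=
  ⟨{DYA.a, DYA.b, DYA.c, DYA.A, DYA.B, DYA.C}, fun x => by cases x <;> simp⟩

/-- Dueck's deterministic MAC `W : 𝒳₁ × {0,1} → 𝒴₁ × {0,1}`. -/
def DW : DXA → Bool → DYA × Bool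
  | .a, false => (.c, false)
  | .b, false => (.c, false)
  | .A, true  => (.C, true)
  | .B, true  => (.C, true)
  | .a, true  => (.a, true)
  | .b, true  => (.b, true)
  | .A, false => (.A, false)
  | .B, false => (.B, false)

/-- Number of erased coordinates (`c` or `C`) of an output word. -/
noncomputable def erasures (n : ℕ) (y : Fin n → DYA) : ℕ :=
  (Finset.univ.filter fun t => y t = DYA.c ∨ y t = DYA.C).card

/-- An output word is good if at most half of its coordinates are erased. -/
def GoodOut (n : ℕ) (y : Fin n → DYA) : Prop := 2 * erasures n y ≤ n

/-!
Fix a good `y₁`. The first-encoder words compatible with `y₁` form a set `S` of size at most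
`2 ^ erasures ≤ 2^{n/2}`, whatever `y₂` is. Among the injective codebooks `f : [M] → 𝒳₁ⁿ`, those
sending a fixed set `T` of `ℓ` messages into `S` are at most `|S|^ℓ · (4ⁿ)_{M-ℓ}` (falling
factorial), a fraction at most `(|S| / (4ⁿ - M))^ℓ` of all of them. A union bound over the `≤ M^ℓ`
sets `T` and the `≤ 6ⁿ` words `y₁` bounds the bad fraction by `6ⁿ (M 2^{n/2} / (4ⁿ - M))^ℓ
≤ 6ⁿ 2^{(1 - δn)ℓ}`, and `ℓ = ⌈3/δ⌉ + 1 ≤ δn` makes this at most `2^{13n/5} 2^{-3n} = 2^{-0.4n}`.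
-/

open Finset

section InjectiveMaps

variable {α β : Type*} [Fintype α] [DecidableEq α] [Fintype β] [DecidableEq β]

theorem card_filter_injective :
    #(univ.filter (Function.Injective : (α → β) → Prop)) =
      (Fintype.card β).descFactorial (Fintype.card α) := by
  rw [← Fintype.card_embedding_eq, ← Fintype.card_subtype]
  exact Fintype.card_congr (Equiv.subtypeInjectiveEquivEmbedding α β)

theorem card_filter_injective_forall_mem_le (T : Finset α) (S : Finset β) :
    #((univ.filter (Function.Injective : (α → β) → Prop)).filter fun f => ∀ w ∈ T, f w ∈ S) ≤
      #S ^ #T * (Fintype.card β).descFactorial (Fintype.card α - #T) := by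
  calc _ ≤ #(Fintype.piFinset (fun _ : T => S) ×ˢ
          univ.filter (Function.Injective : ((Tᶜ : Finset α) → β) → Prop)) := by
        refine card_le_card_of_injOn (fun f => (fun w => f w, fun w => f w)) ?_ ?_
        · intro f hf
          simp only [mem_coe, mem_filter, mem_univ, true_and] at hf
          simp only [mem_coe, mem_product, Fintype.mem_piFinset, mem_filter, mem_univ, true_and]
          exact ⟨fun w => hf.2 w w.2, hf.1.comp Subtype.val_injective⟩
        · intro f _ g _ hfg
          obtain ⟨hT, hTc⟩ := Prod.ext_iff.1 hfg
          funext w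
          by_cases hw : w ∈ T
          · exact congrFun hT ⟨w, hw⟩
          · exact congrFun hTc ⟨w, mem_compl.2 hw⟩
    _ = _ := by
        rw [card_product, Fintype.card_piFinset, prod_const, card_univ, Fintype.card_coe,
          card_filter_injective, Fintype.card_coe, card_compl]

theorem card_filter_injective_forall_mem_mul_le (T : Finset α) (S : Finset β) :
    #((univ.filter (Function.Injective : (α → β) → Prop)).filter fun f => ∀ w ∈ T, f w ∈ S) *
        (Fintype.card β - Fintype.card α) ^ #T ≤
      #S ^ #T * #(univ.filter (Function.Injective : (α → β) → Prop)) := by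
  have hT : #T ≤ Fintype.card α := card_le_univ T
  rw [card_filter_injective, ← Nat.descFactorial_mul_descFactorial (Nat.sub_le _ #T),
    Nat.sub_sub_self hT]
  calc _ ≤ #S ^ #T * (Fintype.card β).descFactorial (Fintype.card α - #T) *
        (Fintype.card β - (Fintype.card α - #T)).descFactorial #T := by
        gcongr
        · exact card_filter_injective_forall_mem_le T S
        · refine le_trans (Nat.pow_le_pow_left ?_ _) (Nat.pow_sub_le_descFactorial _ _)
          omega
    _ = _ := by ring

theorem card_filter_injective_exists_many_mul_le {ι : Type*} (I : Finset ι) (S : ι → Finset β)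
    {s : ℕ} (hS : ∀ i ∈ I, #(S i) ≤ s) (ℓ : ℕ) :
    #((univ.filter (Function.Injective : (α → β) → Prop)).filter
          fun f => ∃ i ∈ I, ℓ ≤ #(univ.filter fun w => f w ∈ S i)) *
        (Fintype.card β - Fintype.card α) ^ ℓ ≤
      #I * (Fintype.card α).choose ℓ * s ^ ℓ *
        #(univ.filter (Function.Injective : (α → β) → Prop)) := by
  set Ω := univ.filter (Function.Injective : (α → β) → Prop)
  have hcover : Ω.filter (fun f => ∃ i ∈ I, ℓ ≤ #(univ.filter fun w => f w ∈ S i)) ⊆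
      I.biUnion fun i => (powersetCard ℓ univ).biUnion fun T =>
        Ω.filter fun f => ∀ w ∈ T, f w ∈ S i := by
    intro f hf
    obtain ⟨hfΩ, i, hi, hℓ⟩ := mem_filter.1 hf
    obtain ⟨T, hTS, hT⟩ := exists_subset_card_eq hℓ
    simp only [mem_biUnion, mem_powersetCard_univ, mem_filter]
    exact ⟨i, hi, T, hT, hfΩ, fun w hw => (mem_filter.1 (hTS hw)).2⟩
  have hterm : ∀ i ∈ I, ∀ T ∈ powersetCard ℓ (univ : Finset α),
      #(Ω.filter fun f => ∀ w ∈ T, f w ∈ S i) * (Fintype.card β - Fintype.card α) ^ ℓ ≤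
        s ^ ℓ * #Ω := by
    intro i hi T hT
    rw [← (mem_powersetCard_univ.1 hT)]
    exact (card_filter_injective_forall_mem_mul_le T (S i)).trans
      (Nat.mul_le_mul_right _ (Nat.pow_le_pow_left (hS i hi) _))
  calc _ ≤ (∑ i ∈ I, ∑ T ∈ powersetCard ℓ univ, #(Ω.filter fun f => ∀ w ∈ T, f w ∈ S i)) *
        (Fintype.card β - Fintype.card α) ^ ℓ := by
        gcongr
        exact (card_le_card hcover).trans <| card_biUnion_le.trans <|
          sum_le_sum fun i _ => card_biUnion_le
    _ ≤ ∑ i ∈ I, ∑ T ∈ powersetCard ℓ (univ : Finset α), s ^ ℓ * #Ω := by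
        simp only [sum_mul]
        exact sum_le_sum fun i hi => sum_le_sum (hterm i hi)
    _ = _ := by simp only [sum_const, card_powersetCard, card_univ, smul_eq_mul]; ring

end InjectiveMaps

theorem one_sub_le_card_filter_div_card {γ : Type*} {s : Finset γ} (hs : s.Nonempty)
    (p : γ → Prop) [DecidablePred p] {ε : ℝ} (h : (#(s.filter fun a => ¬ p a) : ℝ) ≤ ε * #s) :
    1 - ε ≤ #(s.filter p) / #s := by
  have hpos : (0 : ℝ) < #s := by exact_mod_cast hs.card_pos
  have hsplit : (#(s.filter p) : ℝ) + #(s.filter fun a => ¬ p a) = #s := by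
    exact_mod_cast card_filter_add_card_filter_not p
  rw [le_div_iff₀ hpos]
  linarith

/-- Contains `Pre₁(y₁, y₂)` for every `y₂`, so the union bound need only range over `y₁`. -/
def pre₁ (n : ℕ) (y₁ : Fin n → DYA) : Finset (Fin n → DXA) :=
  Fintype.piFinset fun t => univ.filter fun x => ∃ b, (DW x b).1 = y₁ t

theorem mem_pre₁_of_DW_eq {n : ℕ} {x : Fin n → DXA} {x₂ : Fin n → Bool}
    {y₁ : Fin n → DYA} {y₂ : Fin n → Bool} (h : ∀ t, DW (x t) (x₂ t) = (y₁ t, y₂ t)) :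
    x ∈ pre₁ n y₁ :=
  Fintype.mem_piFinset.2 fun t => mem_filter.2 ⟨mem_univ _, x₂ t, by rw [h t]⟩

theorem card_DW_fst_fiber_le : ∀ y : DYA,
    #(univ.filter fun x => ∃ b, (DW x b).1 = y) ≤ if y = DYA.c ∨ y = DYA.C then 2 else 1 := by
  decide

theorem card_pre₁_le (n : ℕ) (y₁ : Fin n → DYA) : #(pre₁ n y₁) ≤ 2 ^ erasures n y₁ := by
  calc #(pre₁ n y₁) ≤ ∏ t, if y₁ t = DYA.c ∨ y₁ t = DYA.C then 2 else 1 := by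
        rw [pre₁, Fintype.card_piFinset]
        exact prod_le_prod' fun t _ => card_DW_fst_fiber_le (y₁ t)
    _ = 2 ^ erasures n y₁ := by rw [prod_ite, prod_const, prod_const, one_pow, mul_one]; rfl

theorem card_pre₁_le_of_goodOut {n : ℕ} {y₁ : Fin n → DYA} (h : GoodOut n y₁) :
    #(pre₁ n y₁) ≤ 2 ^ (n / 2) :=
  (card_pre₁_le n y₁).trans <| Nat.pow_le_pow_right two_pos <| by unfold GoodOut at h; omega

theorem card_bad_codebooks_mul_le (n M L : ℕ) :
    #((univ.filter fun f : Fin M → Fin n → DXA => Function.Injective f).filter fun f =>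
        ¬ ∀ (y₁ : Fin n → DYA) (y₂ : Fin n → Bool), GoodOut n y₁ →
          #(univ.filter fun w => ∃ x₂ : Fin n → Bool, ∀ t, DW (f w t) (x₂ t) = (y₁ t, y₂ t)) ≤ L) *
        (4 ^ n - M) ^ (L + 1) ≤
      6 ^ n * M ^ (L + 1) * (2 ^ (n / 2)) ^ (L + 1) *
        #(univ.filter fun f : Fin M → Fin n → DXA => Function.Injective f) := by
  have hcard : Fintype.card (Fin n → DXA) = 4 ^ n := by rw [Fintype.card_fun, Fintype.card_fin]; rfl
  have hmany := card_filter_injective_exists_many_mul_le (α := Fin M)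
    (univ.filter (GoodOut n)) (pre₁ n) (fun _ hy => card_pre₁_le_of_goodOut (mem_filter.1 hy).2)
    (L + 1)
  rw [hcard, Fintype.card_fin] at hmany
  refine le_trans ?_ (hmany.trans ?_)
  · refine Nat.mul_le_mul_right _ (card_le_card fun f hf => ?_)
    obtain ⟨hf, hbad⟩ := mem_filter.1 hf
    push Not at hbad
    obtain ⟨y₁, y₂, hgood, hL⟩ := hbad
    refine mem_filter.2 ⟨hf, y₁, mem_filter.2 ⟨mem_univ _, hgood⟩, hL.trans_le (card_le_card ?_)⟩
    intro w hw
    obtain ⟨x₂, hx₂⟩ := (mem_filter.1 hw).2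
    exact mem_filter.2 ⟨mem_univ _, mem_pre₁_of_DW_eq hx₂⟩
  · gcongr
    · exact (card_filter_le _ _).trans (by rw [card_univ, Fintype.card_fun, Fintype.card_fin]; rfl)
    · exact Nat.choose_le_pow _ _

theorem six_pow_le_two_rpow (n : ℕ) : (6 : ℝ) ^ n ≤ 2 ^ ((13 / 5 : ℝ) * n) := by
  have h6 : (6 : ℝ) ≤ 2 ^ (13 / 5 : ℝ) :=
    calc (6 : ℝ) = ((6 : ℝ) ^ 5) ^ (1 / 5 : ℝ) := by
          rw [← Real.rpow_natCast, ← Real.rpow_mul] <;> norm_num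
      _ ≤ ((2 : ℝ) ^ 13) ^ (1 / 5 : ℝ) := by gcongr; norm_num
      _ = 2 ^ (13 / 5 : ℝ) := by rw [← Real.rpow_natCast, ← Real.rpow_mul] <;> norm_num
  calc (6 : ℝ) ^ n ≤ (2 ^ (13 / 5 : ℝ)) ^ n := by gcongr
    _ = 2 ^ ((13 / 5 : ℝ) * n) := by rw [← Real.rpow_natCast, ← Real.rpow_mul zero_le_two]

theorem four_pow_eq_two_mul_two_rpow (n : ℕ) : (4 : ℝ) ^ n = 2 * 2 ^ (2 * (n : ℝ) - 1) := by
  rw [mul_comm, ← Real.rpow_add_one two_ne_zero, sub_add_cancel, Real.rpow_mul zero_le_two,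
    Real.rpow_natCast]
  norm_num

theorem le_two_rpow_two_mul_sub_one {δ : ℝ} (hδ : 0 < δ) {n : ℕ} (hn : 2 ≤ n) {m : ℝ}
    (hm : m ≤ 2 ^ ((n : ℝ) * (3 / 2 - δ))) : m ≤ 2 ^ (2 * (n : ℝ) - 1) := by
  have hn' : (2 : ℝ) ≤ n := by exact_mod_cast hn
  exact hm.trans (Real.rpow_le_rpow_of_exponent_le one_le_two (by nlinarith))

theorem six_pow_mul_pow_le_two_rpow_mul_pow {δ : ℝ} (hδ : 0 < δ) {n ℓ : ℕ} (hn : 2 ≤ n)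
    (hℓ : 3 + δ ≤ δ * ℓ) (hℓn : ℓ ≤ δ * n) {m : ℝ} (hm0 : 0 ≤ m)
    (hm : m ≤ 2 ^ ((n : ℝ) * (3 / 2 - δ))) :
    6 ^ n * (m * 2 ^ (n / 2)) ^ ℓ ≤ 2 ^ (-(0.4 : ℝ) * n) * (4 ^ n - m) ^ ℓ := by
  set a : ℝ := 2 ^ (2 * (n : ℝ) - 1)
  have hmul : m * 2 ^ (n / 2) ≤ a * 2 ^ (1 - δ * n) :=
    calc m * 2 ^ (n / 2) ≤ 2 ^ ((n : ℝ) * (3 / 2 - δ)) * 2 ^ ((n : ℝ) / 2) := by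
          gcongr
          rw [← Real.rpow_natCast]
          exact Real.rpow_le_rpow_of_exponent_le one_le_two Nat.cast_div_le
      _ = a * 2 ^ (1 - δ * n) := by rw [← Real.rpow_add two_pos, ← Real.rpow_add two_pos]; ring_nf
  have ha : a ≤ 4 ^ n - m := by
    linarith [four_pow_eq_two_mul_two_rpow n, le_two_rpow_two_mul_sub_one hδ hn hm]
  have hsmall : 6 ^ n * (2 ^ (1 - δ * n) : ℝ) ^ ℓ ≤ 2 ^ (-(0.4 : ℝ) * n) :=
    calc 6 ^ n * (2 ^ (1 - δ * n) : ℝ) ^ ℓ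
        ≤ 2 ^ ((13 / 5 : ℝ) * n) * 2 ^ (-3 * (n : ℝ)) := by
          rw [← Real.rpow_natCast ((2 : ℝ) ^ (1 - δ * n)) ℓ, ← Real.rpow_mul zero_le_two]
          refine mul_le_mul (six_pow_le_two_rpow n)
            (Real.rpow_le_rpow_of_exponent_le one_le_two ?_) (by positivity) (by positivity)
          nlinarith
      _ = 2 ^ (-(0.4 : ℝ) * n) := by rw [← Real.rpow_add two_pos]; ring_nf
  calc 6 ^ n * (m * 2 ^ (n / 2)) ^ ℓ ≤ 6 ^ n * (a * 2 ^ (1 - δ * n)) ^ ℓ := by gcongr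
    _ = (6 ^ n * (2 ^ (1 - δ * n) : ℝ) ^ ℓ) * a ^ ℓ := by ring
    _ ≤ 2 ^ (-(0.4 : ℝ) * n) * (4 ^ n - m) ^ ℓ := by gcongr

/-- Probabilistic list-size bound for Dueck's MAC: a uniformly random injective
codebook `f : [M n] → 𝒳₁ⁿ` with `M n ≤ 2^{n(3/2−δ)}` codewords satisfies, with
probability at least `1 − 2^{−0.4n}` for sufficiently large `n`, that for every good
output `(y₁ⁿ,y₂ⁿ)` at most `⌈3/δ⌉` messages `w` have `f w` in the preimage set
`Pre₁(y₁ⁿ,y₂ⁿ) = {x₁ⁿ | ∃ x₂ⁿ, Wⁿ(x₁ⁿ,x₂ⁿ) = (y₁ⁿ,y₂ⁿ)}`. -/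
theorem dueck_random_codebook_list_size (δ : ℝ) (hδ : 0 < δ) (M : ℕ → ℕ)
    (hM : ∀ n : ℕ, (M n : ℝ) ≤ 2 ^ ((n : ℝ) * (3 / 2 - δ))) :
    ∃ n₀ : ℕ, ∀ n ≥ n₀,
      1 - (2 : ℝ) ^ (-(0.4 : ℝ) * n) ≤
        (((Finset.univ.filter fun f : Fin (M n) → Fin n → DXA =>
            Function.Injective f).filter fun f =>
              ∀ (y₁ : Fin n → DYA) (y₂ : Fin n → Bool), GoodOut n y₁ →
                (Finset.univ.filter fun w : Fin (M n) =>
                  ∃ x₂ : Fin n → Bool,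
                    ∀ t, DW (f w t) (x₂ t) = (y₁ t, y₂ t)).card ≤ ⌈3 / δ⌉₊).card : ℝ) /
          ((Finset.univ.filter fun f : Fin (M n) → Fin n → DXA =>
            Function.Injective f).card : ℝ) := by
  set ℓ := ⌈3 / δ⌉₊ + 1
  refine ⟨max 2 ⌈ℓ / δ⌉₊, fun n hn => ?_⟩
  have hn2 : 2 ≤ n := le_of_max_le_left hn
  have hℓn : (ℓ : ℝ) ≤ δ * n := by
    rw [← div_le_iff₀' hδ]
    exact (Nat.le_ceil _).trans (Nat.cast_le.2 (le_of_max_le_right hn))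
  have hℓ : 3 + δ ≤ δ * ℓ := by
    have := (div_le_iff₀' hδ).1 (Nat.le_ceil (3 / δ))
    push_cast [ℓ]
    linarith
  have hMN : (M n : ℝ) < 4 ^ n := by
    linarith [four_pow_eq_two_mul_two_rpow n, le_two_rpow_two_mul_sub_one hδ hn2 (hM n),
      Real.rpow_pos_of_pos two_pos (2 * (n : ℝ) - 1)]
  have hMN' : M n ≤ 4 ^ n := by exact_mod_cast hMN.le
  obtain ⟨e⟩ := Function.Embedding.nonempty_of_card_le (α := Fin (M n)) (β := Fin n → DXA)
    (by rwa [Fintype.card_fin, Fintype.card_fun, Fintype.card_fin])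
  apply one_sub_le_card_filter_div_card
  · exact ⟨e, mem_filter.2 ⟨mem_univ _, e.injective⟩⟩
  refine le_of_mul_le_mul_right ?_ (pow_pos (sub_pos.2 hMN) ℓ)
  calc _ ≤ 6 ^ n * (M n * 2 ^ (n / 2) : ℝ) ^ ℓ *
        #(univ.filter fun f : Fin (M n) → Fin n → DXA => Function.Injective f) := by
        have hcount : ((_ : ℕ) : ℝ) ≤ _ := Nat.cast_le.2 (card_bad_codebooks_mul_le n (M n) ⌈3 / δ⌉₊)
        push_cast [Nat.cast_sub hMN'] at hcount
        rw [mul_pow, ← mul_assoc]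
        exact hcount
    _ ≤ 2 ^ (-(0.4 : ℝ) * n) * (4 ^ n - M n) ^ ℓ *
        #(univ.filter fun f : Fin (M n) → Fin n → DXA => Function.Injective f) :=
        mul_le_mul_of_nonneg_right
          (six_pow_mul_pow_le_two_rpow_mul_pow hδ hn2 hℓ hℓn (Nat.cast_nonneg _) (hM n)) (Nat.cast_nonneg _)
    _ = _ := by ring
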